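/- arXiv:2503.01848 — 10 statements merged into one kernel-verified Lean document; each statement's English description precedes it below -/
import Mathlib

section
/- In an involutive BE algebra X, for all x, y, z, u ∈ X one has (x → y*)* → (z → u*) = (x → z*)* → (y → u*). -/
/-- A BE algebra: (X, →, 1) with the four BE axioms. -/
class BEAlgebra (X : Type*) where
  imp : X → X → X
  one : X
  be1 : ∀ x : X, imp x x = one
  be2 : ∀ x : X, imp x one = one
  be3 : ∀ x : X, imp one x = x
  be4 : ∀ x y z : X, imp x (imp y z) = imp y (imp x z)

/-- A bounded BE algebra: there is 0 with 0 → x = 1 for all x. -/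
class BoundedBEAlgebra (X : Type*) extends BEAlgebra X where
  zero : X
  bound : ∀ x : X, imp zero x = one

/-- The negation x* = x → 0. -/
def bstar {X : Type*} [BoundedBEAlgebra X] (x : X) : X :=
  BEAlgebra.imp x BoundedBEAlgebra.zero

/-- An involutive BE algebra: x** = x. -/
class InvolutiveBEAlgebra (X : Type*) extends BoundedBEAlgebra X where
  invol : ∀ x : X, bstar (bstar x) = x

/-- An implicative-ortholattice: an implicative involutive BE algebra,
    i.e. (x → y) → x = x. -/
class ImplicativeOrtholattice (X : Type*) extends InvolutiveBEAlgebra X where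
  impl : ∀ x y : X, imp (imp x y) x = x

open BEAlgebra BoundedBEAlgebra

variable {X : Type*}

/-- x ∨_Q y = (x → y) → y. -/
def veeQ [BEAlgebra X] (x y : X) : X := imp (imp x y) y

/-- x ∧_Q y = ((x* → y*) → y*)*. -/
def wedgeQ [InvolutiveBEAlgebra X] (x y : X) : X :=
  bstar (imp (imp (bstar x) (bstar y)) (bstar y))

/-- x ≤_L y iff x = (x → y*)*. -/
def leL [InvolutiveBEAlgebra X] (x y : X) : Prop := x = bstar (imp x (bstar y))

/-- x ≤_Q y iff x = x ∧_Q y. -/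
def leQ [InvolutiveBEAlgebra X] (x y : X) : Prop := x = wedgeQ x y

/-- An implicative-orthomodular lattice: an i-OL with (IOM) x ∧_Q (y → x) = x. -/
class IOML (X : Type*) extends ImplicativeOrtholattice X where
  iom : ∀ x y : X, wedgeQ x (imp y x) = x

lemma swap_star [BoundedBEAlgebra X] (a b : X) :
    imp a (bstar b) = imp b (bstar a) := BEAlgebra.be4 a b _

lemma aux_form [InvolutiveBEAlgebra X] (x y z u : X) :
    imp (bstar (imp x (bstar y))) (imp z (bstar u)) =
      imp x (imp y (imp z (bstar u))) := by
  rw [BEAlgebra.be4, swap_star _ u, InvolutiveBEAlgebra.invol,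
    BEAlgebra.be4 u x, BEAlgebra.be4 z x, swap_star u y, BEAlgebra.be4 z y]

theorem stmt0 [InvolutiveBEAlgebra X] (x y z u : X) :
    imp (bstar (imp x (bstar y))) (imp z (bstar u)) =
      imp (bstar (imp x (bstar z))) (imp y (bstar u)) := by
  rw [aux_form, aux_form, BEAlgebra.be4 y z]
end

section
/- In an involutive BE algebra X, the relation ≤_L defined by x ≤_L y iff x = (x → y*)* is antisymmetric and transitive. -/
open BEAlgebra BoundedBEAlgebra

variable {X : Type*}

lemma swapStar [InvolutiveBEAlgebra X] (a b : X) :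
    imp a (bstar b) = imp b (bstar a) := be4 a b BoundedBEAlgebra.zero

lemma leL_iff [InvolutiveBEAlgebra X] (x y : X) :
    leL x y ↔ bstar x = imp x (bstar y) := by
  constructor
  · intro h
    conv_lhs => rw [h]
    exact InvolutiveBEAlgebra.invol _
  · intro h
    unfold leL
    rw [← h, InvolutiveBEAlgebra.invol]

theorem stmt1 [InvolutiveBEAlgebra X] :
    (∀ x y : X, leL x y → leL y x → x = y) ∧
      (∀ x y z : X, leL x y → leL y z → leL x z) := by
  constructor
  · intro x y hxy hyx
    rw [leL_iff] at hxy hyx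
    have h : bstar x = bstar y := by rw [hxy, swapStar, ← hyx]
    calc x = bstar (bstar x) := (InvolutiveBEAlgebra.invol x).symm
    _ = bstar (bstar y) := by rw [h]
    _ = y := InvolutiveBEAlgebra.invol y
  · intro x y z hxy hyz
    rw [leL_iff] at *
    rw [swapStar x z, hxy, ← be4, swapStar z y, ← hyz, ← swapStar]
end

section
/- In an involutive BE algebra X, X is implicative (i.e., satisfies (x→y)→x = x for all x,y) if and only if X satisfies both (iG) x*→x = x and (Iabs-i) (x→(x→y))→x = x for all x,y. -/
open BEAlgebra BoundedBEAlgebra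

variable {X : Type*}

theorem stmt3 [InvolutiveBEAlgebra X] :
    (∀ x y : X, imp (imp x y) x = x) ↔
      ((∀ x : X, imp (bstar x) x = x) ∧ (∀ x y : X, imp (imp x (imp x y)) x = x)) := by
  constructor
  · intro h
    exact ⟨fun x => h x BoundedBEAlgebra.zero, fun x y => h x (imp x y)⟩
  · rintro ⟨hG, hA⟩ x y
    have contrap : ∀ a b : X, imp a b = imp (bstar b) (bstar a) := by
      intro a b
      conv_lhs => rw [← InvolutiveBEAlgebra.invol b]
      show imp a (imp (bstar b) BoundedBEAlgebra.zero) = _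
      rw [be4]
      rfl
    have hxx : ∀ a : X, imp a (bstar a) = bstar a := by
      intro a
      have := hG (bstar a)
      rwa [InvolutiveBEAlgebra.invol a] at this
    have key : imp x (imp x y) = imp x y := by
      rw [contrap x y, be4, hxx]
    rw [← key]
    exact hA x y
end

section
/- In an implicative-ortholattice X, for all x, y ∈ X: x ≤_Q y implies x ≤_L y, where x ≤_Q y means x = x ∧_Q y with x ∧_Q y = ((x*→y*)→y*)*. -/
open BEAlgebra BoundedBEAlgebra

variable {X : Type*}

theorem stmt5 [ImplicativeOrtholattice X] (x y : X) :
    leQ x y → leL x y := by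
  intro h
  have idem : ∀ a b : X, imp a (imp a b) = imp a b := by
    intro a b
    calc imp a (imp a b) = imp (imp (imp a b) a) (imp a b) := by
          rw [ImplicativeOrtholattice.impl a b]
    _ = imp a b := ImplicativeOrtholattice.impl (imp a b) a
  have hx : bstar x = imp (imp (bstar x) (bstar y)) (bstar y) := by
    have h2 := congrArg bstar h
    rwa [show wedgeQ x y = bstar (imp (imp (bstar x) (bstar y)) (bstar y)) from rfl,
      InvolutiveBEAlgebra.invol] at h2
  have key : imp x (bstar y) = bstar x := by
    calc imp x (bstar y) = imp y (bstar x) := be4 x y zero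
    _ = imp y (imp (imp (bstar x) (bstar y)) (bstar y)) := by rw [← hx]
    _ = imp (imp (bstar x) (bstar y)) (imp y (bstar y)) := be4 _ _ _
    _ = imp (imp (bstar x) (bstar y)) (bstar y) := by
          unfold bstar; rw [idem]
    _ = bstar x := hx.symm
  unfold leL
  rw [key, InvolutiveBEAlgebra.invol]
end

section
/- In an implicative-ortholattice X, if x ≤_L y, then y→z ≤_L x→z and z→x ≤_L z→y for all z. -/
open BEAlgebra BoundedBEAlgebra

variable {X : Type*}

section Aux

variable [ImplicativeOrtholattice X]

lemma my_invol (x : X) : bstar (bstar x) = x := InvolutiveBEAlgebra.invol x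

lemma my_contrap (x y : X) : imp x y = imp (bstar y) (bstar x) := by
  conv_lhs => rw [← my_invol y]
  show imp x (imp (bstar y) zero) = _
  rw [be4]
  rfl

lemma my_D1 (x : X) : imp (bstar x) x = x :=
  ImplicativeOrtholattice.impl x zero

lemma my_swap (a b : X) : imp a (bstar b) = imp b (bstar a) := by
  show imp a (imp b zero) = imp b (imp a zero)
  exact be4 a b zero

lemma my_M3 (y z : X) : imp (bstar (imp y z)) z = imp y z := by
  rw [my_contrap (bstar (imp y z)) z, my_invol, be4, my_D1]

lemma my_aux (x y : X) (H : imp x (bstar y) = bstar x) (z : X) :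
    imp (imp y z) (bstar (imp x z)) = bstar (imp y z) := by
  have N : imp x (imp y z) = imp x z := by
    rw [my_contrap y z, be4, H, ← my_contrap]
  have M : imp (bstar (imp y z)) (imp x z) = imp x z := by
    rw [be4, my_M3, N]
  rw [← M, my_swap]
  exact ImplicativeOrtholattice.impl (bstar (imp y z)) (imp x z)

end Aux

theorem stmt8 [ImplicativeOrtholattice X] (x y : X) (h : leL x y) :
    ∀ z : X, leL (imp y z) (imp x z) ∧ leL (imp z x) (imp z y) := by
  have H : imp x (bstar y) = bstar x :=
    ((congrArg bstar h).trans (my_invol _)).symm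
  intro z
  constructor
  · show _ = bstar (imp (imp y z) (bstar (imp x z)))
    rw [my_aux x y H z, my_invol]
  · have H2 : imp y (bstar x) = bstar x := by rw [my_swap]; exact H
    have S : imp (bstar y) x = y := by
      rw [my_contrap (bstar y) x, my_invol, ← H2]
      exact ImplicativeOrtholattice.impl y (bstar x)
    have H' : imp (bstar y) (bstar (bstar x)) = bstar (bstar y) := by
      rw [my_invol, S]; exact (my_invol y).symm
    show _ = bstar (imp (imp z x) (bstar (imp z y)))
    rw [my_contrap z x, my_contrap z y, my_aux (bstar y) (bstar x) H' (bstar z), my_invol]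
end

section
/- In an involutive BE algebra X, the conditions (IOM): x ∧_Q (y→x) = x for all x,y, (IOM'): x ∧_Q (x*→y) = x for all x,y, and (IOM''): x ∨_Q (x→y)* = x for all x,y, are pairwise equivalent, where x ∨_Q y = (x→y)→y and x ∧_Q y = ((x*→y*)→y*)*. -/
open BEAlgebra BoundedBEAlgebra

variable {X : Type*}

theorem stmt9 [InvolutiveBEAlgebra X] :
    ((∀ x y : X, wedgeQ x (imp y x) = x) ↔ (∀ x y : X, wedgeQ x (imp (bstar x) y) = x)) ∧
      ((∀ x y : X, wedgeQ x (imp (bstar x) y) = x) ↔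
        (∀ x y : X, veeQ x (bstar (imp x y)) = x)) := by
  have contrap : ∀ x y : X, imp x y = imp (bstar y) (bstar x) := by
    intro x y
    conv_lhs => rw [← InvolutiveBEAlgebra.invol y]
    unfold bstar
    exact be4 x _ _
  have hstar_inj : ∀ a b : X, bstar a = bstar b → a = b := by
    intro a b h
    have := congrArg bstar h
    rwa [InvolutiveBEAlgebra.invol, InvolutiveBEAlgebra.invol] at this
  constructor
  · constructor
    · intro h x y
      have : imp (bstar x) y = imp (bstar y) x := by
        rw [contrap (bstar x) y, InvolutiveBEAlgebra.invol]
      rw [this]; exact h x (bstar y)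
    · intro h x y
      have : imp y x = imp (bstar x) (bstar y) := contrap y x
      rw [this]; exact h x (bstar y)
  · constructor
    · intro h x y
      have h1 := h (bstar x) y
      unfold wedgeQ at h1
      rw [InvolutiveBEAlgebra.invol] at h1
      have h2 := congrArg bstar h1
      simp only [InvolutiveBEAlgebra.invol] at h2
      unfold veeQ
      exact h2
    · intro h x y
      unfold wedgeQ
      have h1 := h (bstar x) y
      unfold veeQ at h1
      rw [h1]
      exact InvolutiveBEAlgebra.invol x
end

section
/- An implicative-ortholattice X is an implicative-orthomodular lattice if and only if for all x, y ∈ X, x ≤ y and y ≤_L x imply x = y (where x ≤ y means x→y = 1). -/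
open BEAlgebra BoundedBEAlgebra

variable {X : Type*}

section Aux

variable [ImplicativeOrtholattice X]

lemma my_impl (x y : X) : imp (imp x y) x = x := ImplicativeOrtholattice.impl x y

/-- swap: x → y* = y → x*. -/
lemma my_sw (x y : X) : imp x (bstar y) = imp y (bstar x) := by
  unfold bstar; exact be4 x y BoundedBEAlgebra.zero

/-- contraposition variant: x* → y = y* → x. -/
lemma my_c1 (x y : X) : imp (bstar x) y = imp (bstar y) x := by
  calc imp (bstar x) y = imp (bstar x) (bstar (bstar y)) := by rw [my_invol]
    _ = imp (bstar y) (bstar (bstar x)) := my_sw _ _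
    _ = imp (bstar y) x := by rw [my_invol]

/-- contraction: a → (a → b) = a → b. -/
lemma my_L1 (a b : X) : imp a (imp a b) = imp a b := by
  conv_rhs => rw [← my_impl (imp a b) a]
  rw [my_impl a b]

/-- Key lemma: if a → p = p then ((a → p*) → p*) → a* = ((a → p*) → p*)*. -/
lemma my_key {a p : X} (ha : imp a p = p) :
    imp (imp (imp a (bstar p)) (bstar p)) (bstar a)
      = bstar (imp (imp a (bstar p)) (bstar p)) := by
  set s := imp (imp a (bstar p)) (bstar p) with hs
  have pa : imp p a = a := by
    conv_lhs => rw [← ha]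
    exact my_impl a p
  have hsq : s = imp p (bstar (imp a (bstar p))) := hs.trans (my_sw _ _)
  have asq : imp (bstar a) (bstar (imp a (bstar p))) = a := by
    rw [my_c1 a (bstar (imp a (bstar p))), my_invol]
    exact my_impl a (bstar p)
  have ass : imp (bstar a) s = a := by
    rw [hsq]
    calc imp (bstar a) (imp p (bstar (imp a (bstar p))))
        = imp p (imp (bstar a) (bstar (imp a (bstar p)))) := be4 _ _ _
      _ = imp p a := by rw [asq]
      _ = a := pa
  have ssa : imp (bstar s) a = a := by
    rw [my_c1 s a]
    exact ass
  have h7 : imp a (bstar s) = bstar s := by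
    conv_lhs => rw [← ssa]
    exact my_impl (bstar s) a
  rw [my_sw s a]
  exact h7

/-- Core of the converse direction. -/
lemma my_core (hc : ∀ x y : X, imp x y = BEAlgebra.one → leL y x → x = y)
    (a b : X) :
    imp (imp a (bstar (imp a b))) (bstar (imp a b)) = a := by
  have ha : imp a (imp a b) = imp a b := my_L1 a b
  have h1 : imp a (imp (imp a (bstar (imp a b))) (bstar (imp a b)))
      = BEAlgebra.one := by
    calc imp a (imp (imp a (bstar (imp a b))) (bstar (imp a b)))
        = imp (imp a (bstar (imp a b))) (imp a (bstar (imp a b))) := be4 _ _ _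
      _ = BEAlgebra.one := be1 _
  have h2 : leL (imp (imp a (bstar (imp a b))) (bstar (imp a b))) a := by
    unfold leL
    rw [my_key ha, my_invol]
  exact (hc a _ h1 h2).symm

end Aux

theorem stmt10 [ImplicativeOrtholattice X] :
    (∀ x y : X, wedgeQ x (imp y x) = x) ↔
      (∀ x y : X, imp x y = BEAlgebra.one → leL y x → x = y) := by
  constructor
  · intro h x y hxy hL
    unfold leL at hL
    rw [my_sw] at hL
    have hy' : bstar y = imp x (bstar y) := by
      conv_lhs => rw [hL, my_invol]
    have hk : imp (bstar x) y = x := by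
      rw [my_c1 x y]
      conv_lhs => rw [hy']
      exact my_impl x (bstar y)
    have h2 := h y (bstar x)
    rw [hk] at h2
    unfold wedgeQ at h2
    have h3 : imp (bstar y) (bstar x) = BEAlgebra.one := by
      rw [my_sw (bstar y) x, my_invol, hxy]
    rw [h3, be3, my_invol] at h2
    exact h2
  · intro h x y
    unfold wedgeQ
    have hw : imp y x = imp (bstar x) (bstar y) := by
      conv_lhs => rw [← my_invol x]
      exact my_sw y (bstar x)
    rw [hw, my_core h (bstar x) (bstar y), my_invol]
end

section
/- In an implicative-orthomodular lattice X, for all x, y ∈ X: x* = x→y if and only if x ∧_Q y = 0 (orthogonality is characterized by vanishing meet). -/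
open BEAlgebra BoundedBEAlgebra

variable {X : Type*}

section Aux
variable [IOML X]

lemma contrap (a b : X) : imp a b = imp (bstar b) (bstar a) := by
  conv_lhs => rw [← InvolutiveBEAlgebra.invol b]
  show imp a (imp (bstar b) BoundedBEAlgebra.zero) = _
  rw [be4]
  rfl

lemma L8' (a b : X) : imp (bstar a) (bstar (imp a b)) = a := by
  have h := ImplicativeOrtholattice.impl a b
  rw [contrap (imp a b) a] at h
  exact h

lemma L4 (a : X) : imp a (bstar a) = bstar a := by
  have h := L8' (bstar a) BoundedBEAlgebra.zero
  rw [InvolutiveBEAlgebra.invol] at h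
  have e : imp (bstar a) BoundedBEAlgebra.zero = a := InvolutiveBEAlgebra.invol a
  rw [e] at h
  exact h

lemma iom' (a c : X) :
    imp (imp (bstar a) (bstar (imp c a))) (bstar (imp c a)) = bstar a := by
  have h := IOML.iom a c
  unfold wedgeQ at h
  exact (InvolutiveBEAlgebra.invol _).symm.trans (congrArg bstar h)

lemma lawF (a b : X) :
    imp (imp a (bstar (imp a b))) (bstar (imp a b)) = a := by
  have h := iom' (bstar a) (bstar b)
  rw [InvolutiveBEAlgebra.invol a, ← contrap a b] at h
  exact h

lemma lemS {a b : X} (h : imp a b = b) : imp b a = a := by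
  have hF := lawF a b
  rw [h] at hF
  -- hF : imp (imp a (bstar b)) (bstar b) = a
  calc imp b a = imp b (imp (imp a (bstar b)) (bstar b)) := by rw [hF]
    _ = imp (imp a (bstar b)) (imp b (bstar b)) := be4 _ _ _
    _ = imp (imp a (bstar b)) (bstar b) := by rw [L4]
    _ = a := hF

lemma one_star : bstar (BEAlgebra.one : X) = BoundedBEAlgebra.zero := be3 _

lemma eq_one_of_star_eq_zero {a : X} (h : bstar a = BoundedBEAlgebra.zero) :
    a = BEAlgebra.one := by
  have := congrArg bstar h
  rw [InvolutiveBEAlgebra.invol] at this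
  rw [this]
  exact BoundedBEAlgebra.bound _

end Aux

theorem stmt14 [IOML X] (x y : X) :
    bstar x = imp x y ↔ wedgeQ x y = BoundedBEAlgebra.zero := by
  constructor
  · intro h
    have hx : bstar x = imp (bstar y) (bstar x) := h.trans (contrap x y)
    have h1 : imp (bstar x) (bstar y) = bstar y := by
      conv_lhs => rw [hx]
      exact ImplicativeOrtholattice.impl _ _
    unfold wedgeQ
    rw [h1, be1, one_star]
  · intro h
    have h1 : imp (imp (bstar x) (bstar y)) (bstar y) = BEAlgebra.one :=
      eq_one_of_star_eq_zero h
    have hc : imp y x = imp (bstar x) (bstar y) := contrap y x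
    rw [← hc] at h1
    have hF := lawF (imp y x) y
    rw [ImplicativeOrtholattice.impl y x, h1, be3] at hF
    -- hF : bstar y = imp y x
    have ha : imp (bstar x) (bstar y) = bstar y := by rw [← hc, ← hF]
    have hb := lemS ha
    rw [contrap x y]
    exact hb.symm
end

section
/- An implicative-ortholattice X is an implicative-orthomodular lattice if and only if for all x, y ∈ X with x* = x→y (x orthogonal to y), one has x ∧_Q y* = x. -/
open BEAlgebra BoundedBEAlgebra

variable {X : Type*}

lemma contra1 [ImplicativeOrtholattice X] (a b : X) :
    imp a (bstar b) = imp b (bstar a) := BEAlgebra.be4 a b BoundedBEAlgebra.zero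

lemma contra2 [ImplicativeOrtholattice X] (a b : X) :
    imp a b = imp (bstar b) (bstar a) := by
  conv_lhs => rw [← InvolutiveBEAlgebra.invol b]
  exact contra1 a (bstar b)

theorem stmt15 [ImplicativeOrtholattice X] :
    (∀ x y : X, wedgeQ x (imp y x) = x) ↔
      (∀ x y : X, bstar x = imp x y → wedgeQ x (bstar y) = x) := by
  constructor
  · intro h x y hxy
    have key : imp y x = bstar y := by
      calc imp y x = imp (bstar x) (bstar y) := contra2 y x
        _ = imp (imp x y) (bstar y) := by rw [← hxy]
        _ = imp (imp (bstar y) (bstar x)) (bstar y) := by rw [← contra2]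
        _ = bstar y := ImplicativeOrtholattice.impl _ _
    have := h x y
    rwa [key] at this
  · intro h x y
    have hx : bstar x = imp x (bstar (imp y x)) := by
      calc bstar x = imp (imp (bstar x) (bstar y)) (bstar x) :=
            (ImplicativeOrtholattice.impl _ _).symm
        _ = imp (imp y x) (bstar x) := by rw [← contra2]
        _ = imp x (bstar (imp y x)) := (contra1 _ _).symm
    have := h x (bstar (imp y x)) hx
    rwa [InvolutiveBEAlgebra.invol] at this
end

section
/- An implicative-ortholattice X is an implicative-orthomodular lattice if and only if the commutativity relation is symmetric: for all x, y ∈ X, φ_x y = (x→y*)* implies φ_y x = (y→x*)*. -/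
open BEAlgebra BoundedBEAlgebra

variable {X : Type*}

namespace Stmt19Aux

variable {X : Type*} [ImplicativeOrtholattice X]

lemma inv (x : X) : bstar (bstar x) = x := InvolutiveBEAlgebra.invol x

lemma sinj {p q : X} (h : bstar p = bstar q) : p = q := by
  have := congrArg bstar h; rwa [inv, inv] at this

lemma ctr1 (x y : X) : imp x (bstar y) = imp y (bstar x) := be4 x y zero

lemma ctr2 (x y : X) : imp (bstar x) y = imp (bstar y) x := by
  conv_lhs => rw [← inv y]
  rw [ctr1, inv]

lemma ctr3 (x y : X) : imp (bstar x) (bstar y) = imp y x := by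
  rw [ctr1, inv]

lemma impE (x y : X) : imp (imp x y) x = x := ImplicativeOrtholattice.impl x y

lemma zstar : bstar (zero : X) = one := be1 zero

lemma ostar : bstar (one : X) = zero := be3 zero

lemma l1 (x y : X) : imp x (imp y x) = one := by rw [be4, be1, be2]

/-- The ortholattice join: x ∨ y := x* → y. -/
def orL (x y : X) : X := imp (bstar x) y

/-- The ortholattice meet: x ∧ y := (x* ∨ y*)*. -/
def andL (x y : X) : X := bstar (orL (bstar x) (bstar y))

lemma andL_eq (x y : X) : andL x y = bstar (imp x (bstar y)) := by
  unfold andL orL; rw [inv]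

lemma orL_star (x y : X) : orL (bstar x) y = imp x y := by
  unfold orL; rw [inv]

lemma star_or (x y : X) : bstar (orL x y) = andL (bstar x) (bstar y) := by
  unfold andL; rw [inv, inv]

lemma star_and (x y : X) : bstar (andL x y) = orL (bstar x) (bstar y) := by
  unfold andL; rw [inv]

lemma or_comm' (x y : X) : orL x y = orL y x := ctr2 x y

lemma or_assoc' (x y z : X) : orL (orL x y) z = orL x (orL y z) := by
  show imp (bstar (imp (bstar x) y)) z = imp (bstar x) (imp (bstar y) z)
  rw [ctr2 (imp (bstar x) y) z, be4, ctr2 z y]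

lemma or_idem (x : X) : orL x x = x := impE x zero

lemma or_absorb (x y : X) : orL x (andL x y) = x := by
  show imp (bstar x) (andL x y) = x
  rw [andL_eq, ctr3]
  exact impE x (bstar y)

lemma and_absorb (x y : X) : andL x (orL x y) = x := by
  rw [andL_eq, ctr1]
  show bstar (imp (imp (bstar x) y) (bstar x)) = x
  rw [impE, inv]

lemma and_comm' (x y : X) : andL x y = andL y x := by
  unfold andL; rw [or_comm']

lemma and_assoc' (x y z : X) : andL (andL x y) z = andL x (andL y z) := by
  unfold andL; simp only [inv]; rw [or_assoc']

def lle (x y : X) : Prop := orL x y = y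

lemma lle_refl (x : X) : lle x x := or_idem x

lemma lle_trans {x y z : X} (h1 : lle x y) (h2 : lle y z) : lle x z := by
  unfold lle at *
  rw [← h2, ← or_assoc', h1]

lemma lle_antisymm {x y : X} (h1 : lle x y) (h2 : lle y x) : x = y := by
  unfold lle at *
  calc x = orL y x := h2.symm
    _ = orL x y := or_comm' y x
    _ = y := h1

lemma lle_or_l (x y : X) : lle x (orL x y) := by
  unfold lle; rw [← or_assoc', or_idem]

lemma lle_or_r (x y : X) : lle y (orL x y) := by
  unfold lle; rw [or_comm' x y, ← or_assoc', or_idem]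

lemma lle_iff_and {x y : X} : lle x y ↔ andL x y = x := by
  constructor
  · intro h
    unfold lle at h
    rw [← h]; exact and_absorb x y
  · intro h
    unfold lle
    rw [← h, and_comm', or_comm']
    exact or_absorb y x

lemma and_le_l (x y : X) : lle (andL x y) x := by
  unfold lle; rw [or_comm']; exact or_absorb x y

lemma and_le_r (x y : X) : lle (andL x y) y := by
  rw [and_comm']; exact and_le_l y x

lemma lle_and {z x y : X} (h1 : lle z x) (h2 : lle z y) : lle z (andL x y) := by
  have hx := lle_iff_and.mp h1
  have hy := lle_iff_and.mp h2
  apply lle_iff_and.mpr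
  rw [← and_assoc', hx, hy]

lemma or_zero (x : X) : orL x zero = x := inv x

lemma zero_or (x : X) : orL zero x = x := by
  show imp (bstar zero) x = x
  rw [zstar, be3]

lemma and_star_self (x : X) : andL x (bstar x) = zero := by
  unfold andL orL
  simp only [inv]
  rw [be1, ostar]

lemma lle_zero {x : X} (h : lle x zero) : x = zero :=
  lle_antisymm h (zero_or x)

section IOM

variable (h : ∀ x y : X, wedgeQ x (imp y x) = x)
include h

lemma iom' (a b : X) :
    imp (imp a (bstar (imp a b))) (bstar (imp a b)) = a := by
  have h3 := h (bstar a) (bstar b)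
  unfold wedgeQ at h3
  rw [ctr3 b a, inv] at h3
  exact sinj h3

lemma omL {t q : X} (ht : lle t q) : orL t (andL q (bstar t)) = q := by
  have h1 : andL t q = t := lle_iff_and.mp ht
  rw [andL_eq] at h1
  have h2 : imp t (bstar q) = bstar t := by
    have := congrArg bstar h1; rwa [inv] at this
  have h3 : imp q (bstar t) = bstar t := by rw [ctr1 q t]; exact h2
  have h4 := iom' h q (bstar t)
  rw [h3, inv] at h4
  rw [andL_eq, inv]
  show imp (bstar t) (bstar (imp q t)) = q
  rw [ctr3]
  exact h4

lemma orthL {s b : X} (h0 : andL s (orL (bstar s) b) = zero) : lle b (bstar s) := by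
  have h1 : lle (bstar s) (orL (bstar s) b) := lle_or_l _ _
  have h2 := omL h h1
  rw [inv, and_comm', h0, or_zero] at h2
  have h3 : lle b (orL (bstar s) b) := lle_or_r _ _
  rw [← h2] at h3
  exact h3

lemma mainlat (a b : X)
    (H : andL a (orL (bstar a) b) = andL a b) :
    andL b (orL (bstar b) a) = andL b a := by
  have hna : lle (andL a b) a := and_le_l a b
  have hnb : lle (andL a b) b := and_le_r a b
  have h2 : orL (andL a b) (andL a (bstar (andL a b))) = a := omL h hna
  have hnb' : orL (andL a b) b = b := hnb
  have h4 : orL (bstar (andL a (bstar (andL a b)))) b = orL (bstar a) b := by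
    rw [star_and, inv, or_assoc', hnb']
  have h5 : andL (andL a (bstar (andL a b)))
      (orL (bstar (andL a (bstar (andL a b)))) b) = zero := by
    rw [h4, and_assoc', and_comm' (bstar (andL a b)) (orL (bstar a) b),
      ← and_assoc', H, and_star_self]
  have hbs : lle b (bstar (andL a (bstar (andL a b)))) := orthL h h5
  have hmy : lle (andL b (orL (bstar b) a)) b := and_le_l _ _
  have hnm : lle (andL a b) (andL b (orL (bstar b) a)) :=
    lle_and hnb (lle_trans hna (lle_or_r (bstar b) a))
  have hms : lle (andL b (orL (bstar b) a)) (bstar (andL a (bstar (andL a b)))) :=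
    lle_trans hmy hbs
  have key : andL (andL b (orL (bstar b) a)) (bstar (andL a b)) = zero := by
    apply lle_zero
    have q2 : andL (bstar (andL a (bstar (andL a b)))) (bstar (andL a b)) = bstar a := by
      rw [← star_or, or_comm', h2]
    have p1 : lle (andL (andL b (orL (bstar b) a)) (bstar (andL a b))) (bstar a) := by
      have := lle_and (lle_trans (and_le_l _ _) hms)
        (and_le_r (andL b (orL (bstar b) a)) (bstar (andL a b)))
      rwa [q2] at this
    have p2 : lle (andL (andL b (orL (bstar b) a)) (bstar (andL a b))) b :=
      lle_trans (and_le_l _ _) hmy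
    have p3 : lle (andL (andL b (orL (bstar b) a)) (bstar (andL a b))) (orL (bstar b) a) :=
      lle_trans (and_le_l _ _) (and_le_r _ _)
    have p4 := lle_and p1 p2
    have p5 : bstar (andL (bstar a) b) = orL (bstar b) a := by
      rw [star_and, inv, or_comm']
    have p6 : lle (andL (andL b (orL (bstar b) a)) (bstar (andL a b)))
        (bstar (andL (bstar a) b)) := by
      rw [p5]; exact p3
    have p7 := lle_and p4 p6
    rwa [and_star_self] at p7
  have h12 := omL h hnm
  rw [key, or_zero] at h12
  rw [← h12, and_comm']

end IOM

end Stmt19Aux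

open Stmt19Aux in
theorem stmt19 [ImplicativeOrtholattice X] :
    (∀ x y : X, wedgeQ x (imp y x) = x) ↔
      (∀ x y : X, wedgeQ y x = bstar (imp x (bstar y)) →
        wedgeQ x y = bstar (imp y (bstar x))) := by
  constructor
  · -- IOM implies symmetry of commutation
    intro h x y hyp
    unfold wedgeQ at hyp
    have h' : imp (imp (bstar y) (bstar x)) (bstar x) = imp x (bstar y) := sinj hyp
    have H : andL x (orL (bstar x) y) = andL x y := by
      rw [andL_eq, andL_eq, orL_star]
      congr 1
      rw [ctr1 x (imp x y), ← ctr3 y x]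
      exact h'
    have G : andL y (orL (bstar y) x) = andL y x := mainlat h x y H
    have G' : imp y (bstar (imp y x)) = imp y (bstar x) := by
      rw [andL_eq, andL_eq, orL_star] at G
      exact sinj G
    show bstar (imp (imp (bstar x) (bstar y)) (bstar y)) = bstar (imp y (bstar x))
    rw [ctr3 x y, ← ctr1 y (imp y x), G']
  · -- symmetry of commutation implies IOM
    intro hS x y
    have hyp : wedgeQ (imp y x) x = bstar (imp x (bstar (imp y x))) := by
      unfold wedgeQ
      rw [ctr3 (imp y x) x, l1, be3, ctr1 x (imp y x), ← ctr3 x y, impE]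
    have conc := hS x (imp y x) hyp
    rw [conc, ← ctr3 x y, impE, inv]
end
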